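/- arXiv:2502.12606 — 3 statements merged into one kernel-verified Lean document; each statement's English description precedes it below -/
import Mathlib

section
/- Let γ : S¹ → H² be a smooth immersed closed curve in the hyperbolic upper half-plane with turning number m ∈ ℤ (Euclidean total curvature divided by 2π). Then the total hyperbolic curvature satisfies ∫ κ ds = 2πm + ∫ (∂ₛγ⁽¹⁾)/γ⁽²⁾ ds, where ds is hyperbolic arc length and ∂ₛ is the hyperbolic arc-length derivative. -/
open Real

noncomputable section

/-- Euclidean norm of a vector in `ℝ × ℝ`. -/
def euclNorm (v : ℝ × ℝ) : ℝ := Real.sqrt (v.1 ^ 2 + v.2 ^ 2)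

/-- Hyperbolic arc-length derivative `∂ₛ = (γ⁽²⁾/|∂ₓγ|) ∂ₓ` applied to a vector field
along the curve `γ` in the upper half-plane. -/
def sderiv (γ X : ℝ → ℝ × ℝ) (x : ℝ) : ℝ × ℝ :=
  ((γ x).2 / euclNorm (deriv γ x)) • deriv X x

/-- Hyperbolic unit tangent `∂ₛγ`. -/
def sTang (γ : ℝ → ℝ × ℝ) : ℝ → ℝ × ℝ := sderiv γ γ

/-- The covariant derivative `∇_{∂ₓγ} X` in the hyperbolic upper half-plane,
in coordinates. -/
def covD (γ X : ℝ → ℝ × ℝ) (x : ℝ) : ℝ × ℝ :=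
  ((deriv X x).1 - ((X x).1 * (deriv γ x).2 + (X x).2 * (deriv γ x).1) / (γ x).2,
   (deriv X x).2 + ((X x).1 * (deriv γ x).1 - (X x).2 * (deriv γ x).2) / (γ x).2)

/-- The covariant derivative `∇ₛ X = (1/|∂ₓγ|_g) ∇_{∂ₓγ} X` along `γ`. -/
def covS (γ X : ℝ → ℝ × ℝ) (x : ℝ) : ℝ × ℝ :=
  ((γ x).2 / euclNorm (deriv γ x)) • covD γ X x

/-- The hyperbolic curvature vector `κ⃗ = ∇ₛ ∂ₛγ`. -/
def kvec (γ : ℝ → ℝ × ℝ) (x : ℝ) : ℝ × ℝ := covS γ (sTang γ) x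

/-- Hyperbolic inner product `⟨a,b⟩_g = ⟨a,b⟩/(γ⁽²⁾)²` at the point `γ x`. -/
def gdot (γ : ℝ → ℝ × ℝ) (a b : ℝ × ℝ) (x : ℝ) : ℝ :=
  (a.1 * b.1 + a.2 * b.2) / (γ x).2 ^ 2

/-- Hyperbolic unit normal `n = J ∂ₛγ` along `γ`. -/
def hNormal (γ : ℝ → ℝ × ℝ) (x : ℝ) : ℝ × ℝ :=
  ((γ x).2 / euclNorm (deriv γ x)) • (-(deriv γ x).2, (deriv γ x).1)

/-- Scalar hyperbolic geodesic curvature `κ = ⟨κ⃗, n⟩_g`. -/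
def hcurv (γ : ℝ → ℝ × ℝ) (x : ℝ) : ℝ := gdot γ (kvec γ x) (hNormal γ x) x

/-- Euclidean scalar curvature of a planar curve. -/
def ecurv (γ : ℝ → ℝ × ℝ) (x : ℝ) : ℝ :=
  ((deriv γ x).1 * (deriv (deriv γ) x).2 - (deriv γ x).2 * (deriv (deriv γ) x).1) /
    euclNorm (deriv γ x) ^ 3

/-- Hyperbolic arc-length element `|∂ₓγ| / γ⁽²⁾`. -/
def dsFactor (γ : ℝ → ℝ × ℝ) (x : ℝ) : ℝ := euclNorm (deriv γ x) / (γ x).2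

/-- Hyperbolic length of a closed curve parametrized over `[0, P]`. -/
def hyperLength (γ : ℝ → ℝ × ℝ) (P : ℝ) : ℝ := ∫ x in (0:ℝ)..P, dsFactor γ x

/-- Total hyperbolic curvature `∫ κ ds` over `[0, P]`. -/
def totalHypCurv (γ : ℝ → ℝ × ℝ) (P : ℝ) : ℝ :=
  ∫ x in (0:ℝ)..P, hcurv γ x * dsFactor γ x

/-- Euclidean total curvature `∫ κ_{ℝ²} ds_{ℝ²}` over `[0, P]`. -/
def totalEuclCurv (γ : ℝ → ℝ × ℝ) (P : ℝ) : ℝ :=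
  ∫ x in (0:ℝ)..P, ecurv γ x * euclNorm (deriv γ x)


lemma hd_fst {f : ℝ → ℝ × ℝ} {f' : ℝ × ℝ} {x : ℝ} (h : HasDerivAt f f' x) :
    HasDerivAt (fun y => (f y).1) f'.1 x := by
  simpa using (h.hasFDerivAt.fst).hasDerivAt

lemma hd_snd {f : ℝ → ℝ × ℝ} {f' : ℝ × ℝ} {x : ℝ} (h : HasDerivAt f f' x) :
    HasDerivAt (fun y => (f y).2) f'.2 x := by
  simpa using (h.hasFDerivAt.snd).hasDerivAt

lemma key (γ : ℝ → ℝ × ℝ) (hsm : ContDiff ℝ (⊤ : ℕ∞) γ) (hpos : ∀ x, 0 < (γ x).2)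
    (himm : ∀ x, deriv γ x ≠ 0) (x : ℝ) :
    hcurv γ x * dsFactor γ x
      = ecurv γ x * euclNorm (deriv γ x) + ((sTang γ x).1 / (γ x).2) * dsFactor γ x := by
  obtain ⟨hd1, hsm'⟩ := contDiff_infty_iff_deriv.mp (hsm.of_le (by simp))
  have hγ : HasDerivAt γ (deriv γ x) x := (hd1 x).hasDerivAt
  have hγ' : HasDerivAt (deriv γ) (deriv (deriv γ) x) x :=
    ((hsm'.differentiable (by simp)) x).hasDerivAt
  set a := deriv γ x with ha
  set b := deriv (deriv γ) x with hb
  have hq : a.1 ^ 2 + a.2 ^ 2 ≠ 0 := by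
    have h0 := himm x
    rw [← ha] at h0
    intro h
    apply h0
    have h1 : a.1 = 0 := by nlinarith [sq_nonneg a.1, sq_nonneg a.2]
    have h2 : a.2 = 0 := by nlinarith [sq_nonneg a.1, sq_nonneg a.2]
    exact Prod.ext h1 h2
  have hqpos : 0 < a.1 ^ 2 + a.2 ^ 2 := lt_of_le_of_ne (by positivity) (Ne.symm hq)
  have hr : 0 < euclNorm a := Real.sqrt_pos.mpr hqpos
  have hQ : HasDerivAt (fun y => (deriv γ y).1 ^ 2 + (deriv γ y).2 ^ 2)
      (2 * a.1 * b.1 + 2 * a.2 * b.2) x := by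
    have := ((hd_fst hγ').fun_pow 2).fun_add ((hd_snd hγ').fun_pow 2)
    rw [← ha] at this
    simpa [mul_comm, mul_assoc, mul_left_comm] using this
  have hR : HasDerivAt (fun y => euclNorm (deriv γ y))
      ((2 * a.1 * b.1 + 2 * a.2 * b.2) / (2 * euclNorm a)) x := by
    simpa [euclNorm] using hQ.sqrt hq
  have hT : HasDerivAt (fun y => ((γ y).2 / euclNorm (deriv γ y)) • deriv γ y)
      (((γ x).2 / euclNorm a) • b
        + ((a.2 * euclNorm a - (γ x).2 * ((2 * a.1 * b.1 + 2 * a.2 * b.2) / (2 * euclNorm a))) / euclNorm a ^ 2) • a) x :=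
    ((hd_snd hγ).div hR hr.ne').smul hγ'
  have hTfun : sTang γ = fun y => ((γ y).2 / euclNorm (deriv γ y)) • deriv γ y := rfl
  have hTd := hT.deriv
  rw [← hTfun] at hTd
  have hv := (hpos x).ne'
  set v := (γ x).2 with hv'
  set r := euclNorm a with hrr
  have hr2 : r ^ 2 = a.1 ^ 2 + a.2 ^ 2 := Real.sq_sqrt hqpos.le
  simp only [hcurv, gdot, kvec, covS, covD, hNormal, dsFactor, ecurv]
  rw [hTd]
  simp only [sTang, sderiv, ← ha, ← hv', ← hrr, Prod.smul_fst, Prod.smul_snd, Prod.fst_add,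
    Prod.snd_add, smul_eq_mul]
  field_simp
  linear_combination (-(r ^ 2 * a.1)) * hr2
/-- for a smooth closed immersed curve `γ : S¹ → H²` with turning number
`m ∈ ℤ`, the total hyperbolic curvature satisfies
`∫ κ ds = 2πm + ∫ (∂ₛγ⁽¹⁾)/γ⁽²⁾ ds`. -/
theorem total_hyperbolic_curvature_eq
    (γ : ℝ → ℝ × ℝ) (P : ℝ) (hP : 0 < P)
    (hper : Function.Periodic γ P)
    (hsm : ContDiff ℝ (⊤ : ℕ∞) γ)
    (hpos : ∀ x, 0 < (γ x).2)
    (himm : ∀ x, deriv γ x ≠ 0)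
    (m : ℤ) (hm : totalEuclCurv γ P = 2 * π * m) :
    totalHypCurv γ P
      = 2 * π * m + ∫ x in (0:ℝ)..P, ((sTang γ x).1 / (γ x).2) * dsFactor γ x := by
  obtain ⟨hd1, hsm'⟩ := contDiff_infty_iff_deriv.mp (hsm.of_le (by simp))
  have hc1 : Continuous (deriv γ) := hsm'.continuous
  have hc2 : Continuous (deriv (deriv γ)) :=
    (contDiff_infty_iff_deriv.mp hsm').2.continuous
  have hen : Continuous fun x => euclNorm (deriv γ x) := by
    simp only [euclNorm]
    exact Real.continuous_sqrt.comp
      (((continuous_fst.comp hc1).pow 2).add ((continuous_snd.comp hc1).pow 2))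
  have hneq : ∀ x, euclNorm (deriv γ x) ≠ 0 := by
    intro x
    have hq : (0:ℝ) < (deriv γ x).1 ^ 2 + (deriv γ x).2 ^ 2 := by
      rcases Prod.mk.injEq (deriv γ x).1 (deriv γ x).2 0 0 with _
      have h0 := himm x
      have : (deriv γ x).1 ≠ 0 ∨ (deriv γ x).2 ≠ 0 := by
        by_contra hcon
        push_neg at hcon
        exact h0 (Prod.ext hcon.1 hcon.2)
      rcases this with h | h
      · positivity
      · positivity
    exact (Real.sqrt_pos.mpr hq).ne'
  have hvne : ∀ x, (γ x).2 ≠ 0 := fun x => (hpos x).ne'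
  have hcv : Continuous fun x => (γ x).2 := continuous_snd.comp hsm.continuous
  have hcf : Continuous fun x => ecurv γ x * euclNorm (deriv γ x) := by
    simp only [ecurv]
    exact (Continuous.div
      (((continuous_fst.comp hc1).mul (continuous_snd.comp hc2)).sub
        ((continuous_snd.comp hc1).mul (continuous_fst.comp hc2)))
      (hen.pow 3) (fun x => pow_ne_zero 3 (hneq x))).mul hen
  have hcg : Continuous fun x => ((sTang γ x).1 / (γ x).2) * dsFactor γ x := by
    simp only [sTang, sderiv, dsFactor, Prod.smul_fst, smul_eq_mul]
    exact (Continuous.div ((Continuous.div hcv hen hneq).mul (continuous_fst.comp hc1))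
        hcv hvne).mul (Continuous.div hen hcv hvne)
  have hint1 : IntervalIntegrable (fun x => ecurv γ x * euclNorm (deriv γ x))
      MeasureTheory.volume 0 P := hcf.intervalIntegrable 0 P
  have hint2 : IntervalIntegrable (fun x => ((sTang γ x).1 / (γ x).2) * dsFactor γ x)
      MeasureTheory.volume 0 P := hcg.intervalIntegrable 0 P
  have hcong : totalHypCurv γ P
      = ∫ x in (0:ℝ)..P, (ecurv γ x * euclNorm (deriv γ x)
          + ((sTang γ x).1 / (γ x).2) * dsFactor γ x) := by
    simp only [totalHypCurv]
    apply intervalIntegral.integral_congr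
    intro x _
    exact key γ hsm hpos himm x
  rw [hcong, intervalIntegral.integral_add hint1 hint2, ← totalEuclCurv, hm]

end
end

section
/- Let γ : S¹ → H² be a smooth immersed closed curve with turning number m ∈ ℤ and hyperbolic length L(γ). Then |∫ κ ds| ≥ 2π|m| − L(γ), where κ is the hyperbolic geodesic curvature and ds the hyperbolic arc-length element. In particular, if L(γ) < 2π|m| then the total hyperbolic curvature is nonzero. -/
open Real

noncomputable section

lemma euclNorm_pos {v : ℝ × ℝ} (hv : v ≠ 0) : 0 < euclNorm v := by
  have h : v.1 ≠ 0 ∨ v.2 ≠ 0 := by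
    by_contra hc
    push_neg at hc
    exact hv (Prod.ext hc.1 hc.2)
  have hS : 0 < v.1 ^ 2 + v.2 ^ 2 := by
    rcases h with h | h
    · have := pow_pos (abs_pos.mpr h) 2
      rw [sq_abs] at this
      nlinarith [sq_nonneg v.2]
    · have := pow_pos (abs_pos.mpr h) 2
      rw [sq_abs] at this
      nlinarith [sq_nonneg v.1]
  exact Real.sqrt_pos.mpr hS

lemma euclNorm_sq (v : ℝ × ℝ) : euclNorm v ^ 2 = v.1 ^ 2 + v.2 ^ 2 :=
  Real.sq_sqrt (by positivity)

lemma hcurv_mul_dsFactor (γ : ℝ → ℝ × ℝ) (hsm : ContDiff ℝ (⊤ : ℕ∞) γ)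
    (hpos : ∀ y, 0 < (γ y).2) (himm : ∀ y, deriv γ y ≠ 0) (x : ℝ) :
    hcurv γ x * dsFactor γ x
      = ecurv γ x * euclNorm (deriv γ x) + (deriv γ x).1 / (γ x).2 := by
  have hsm2 : ContDiff ℝ (↑(⊤ : ℕ∞)) γ := hsm.of_le (by simp)
  obtain ⟨hγd, hγ'⟩ := contDiff_infty_iff_deriv.mp hsm2
  have hN : 0 < euclNorm (deriv γ x) := euclNorm_pos (himm x)
  have hh : 0 < (γ x).2 := hpos x
  -- differentiability of φ := h / N along the curve
  have hdiffv : DifferentiableAt ℝ (deriv γ) x := (hγ'.differentiable (by simp)) x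
  have hq : DifferentiableAt ℝ (fun y => (deriv γ y).1 ^ 2 + (deriv γ y).2 ^ 2) x :=
    (hdiffv.fst.pow 2).add (hdiffv.snd.pow 2)
  have hq0 : (deriv γ x).1 ^ 2 + (deriv γ x).2 ^ 2 ≠ 0 := by
    have := euclNorm_sq (deriv γ x)
    nlinarith
  have hNd : DifferentiableAt ℝ (fun y => euclNorm (deriv γ y)) x := by
    simpa [euclNorm] using hq.sqrt hq0
  have hφd : DifferentiableAt ℝ (fun y => (γ y).2 / euclNorm (deriv γ y)) x :=
    ((hsm.differentiable (by simp) x).snd).div hNd hN.ne'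
  have hwd : DifferentiableAt ℝ (deriv (deriv γ)) x :=
    ((contDiff_infty_iff_deriv.mp hγ').2.differentiable (by simp)) x
  have hT : HasDerivAt (sTang γ)
      (((γ x).2 / euclNorm (deriv γ x)) • deriv (deriv γ) x
        + (deriv (fun y => (γ y).2 / euclNorm (deriv γ y)) x) • deriv γ x) x :=
    hφd.hasDerivAt.smul hdiffv.hasDerivAt
  have hd : deriv (sTang γ) x
      = ((γ x).2 / euclNorm (deriv γ x)) • deriv (deriv γ) x
        + (deriv (fun y => (γ y).2 / euclNorm (deriv γ y)) x) • deriv γ x := hT.deriv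
  set c := deriv (fun y => (γ y).2 / euclNorm (deriv γ y)) x with hc
  set v := deriv γ x with hv
  set w := deriv (deriv γ) x with hw
  set h := (γ x).2 with hhdef
  set N := euclNorm (deriv γ x) with hNdef
  have hN2 : N ^ 2 = v.1 ^ 2 + v.2 ^ 2 := euclNorm_sq v ▸ by rw [hNdef, hv]
  have h1 : hcurv γ x * dsFactor γ x
      = N / h ^ 3 * (h / N) ^ 2
          * (v.1 * (covD γ (sTang γ) x).2 - v.2 * (covD γ (sTang γ) x).1) := by
    simp only [hcurv, gdot, kvec, covS, hNormal, dsFactor, ← hv, ← hhdef, ← hNdef,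
      Prod.smul_fst, Prod.smul_snd, smul_eq_mul]
    ring
  have hd' : deriv (sderiv γ γ) x = (h / N) • w + c • v := hd
  have h2 : v.1 * (covD γ (sTang γ) x).2 - v.2 * (covD γ (sTang γ) x).1
      = (h / N) * (v.1 * w.2 - v.2 * w.1) + (h / N) * v.1 * N ^ 2 / h := by
    simp only [covD, sTang, sderiv, hd', ← hv, ← hw, ← hhdef, ← hNdef, ← hc,
      Prod.fst_add, Prod.snd_add, Prod.smul_fst, Prod.smul_snd, smul_eq_mul]
    simp only [show euclNorm v = N from rfl]
    rw [hN2]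
    field_simp
    ring
  have h3 : ecurv γ x = (v.1 * w.2 - v.2 * w.1) / N ^ 3 := by
    simp only [ecurv, ← hv, ← hw, ← hNdef]
    rfl
  rw [h1, h2, h3]
  field_simp

/-- for a smooth closed immersed curve `γ : S¹ → H²` with turning number
`m` and hyperbolic length `L(γ)`, one has `|∫ κ ds| ≥ 2π|m| − L(γ)`; in particular
if `L(γ) < 2π|m|` the total hyperbolic curvature is nonzero. -/
theorem total_hyperbolic_curvature_lower_bound
    (γ : ℝ → ℝ × ℝ) (P : ℝ) (hP : 0 < P)
    (hper : Function.Periodic γ P)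
    (hsm : ContDiff ℝ (⊤ : ℕ∞) γ)
    (hpos : ∀ x, 0 < (γ x).2)
    (himm : ∀ x, deriv γ x ≠ 0)
    (m : ℤ) (hm : totalEuclCurv γ P = 2 * π * m) :
    2 * π * |(m : ℝ)| - hyperLength γ P ≤ |totalHypCurv γ P| ∧
      (hyperLength γ P < 2 * π * |(m : ℝ)| → totalHypCurv γ P ≠ 0) := by
  have hsm2 : ContDiff ℝ (↑(⊤ : ℕ∞)) γ := hsm.of_le (by simp)
  obtain ⟨hγd, hγ'⟩ := contDiff_infty_iff_deriv.mp hsm2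
  have hcontγ : Continuous γ := hsm.continuous
  have hcontv : Continuous (deriv γ) := hγ'.continuous
  have hcontw : Continuous (deriv (deriv γ)) :=
    (contDiff_infty_iff_deriv.mp hγ').2.continuous
  have hcontN : Continuous (fun x => euclNorm (deriv γ x)) := by
    simp only [euclNorm]
    exact ((hcontv.fst.pow 2).add (hcontv.snd.pow 2)).sqrt
  have hN0 : ∀ x, euclNorm (deriv γ x) ≠ 0 := fun x => (euclNorm_pos (himm x)).ne'
  have hg1 : Continuous (fun x => ecurv γ x * euclNorm (deriv γ x)) := by
    simp only [ecurv]
    exact (((hcontv.fst.mul hcontw.snd).sub (hcontv.snd.mul hcontw.fst)).div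
      (hcontN.pow 3) (fun x => pow_ne_zero 3 (hN0 x))).mul hcontN
  have hg2 : Continuous (fun x => (deriv γ x).1 / (γ x).2) :=
    hcontv.fst.div hcontγ.snd (fun x => (hpos x).ne')
  have hg3 : Continuous (dsFactor γ) :=
    hcontN.div hcontγ.snd (fun x => (hpos x).ne')
  have key : totalHypCurv γ P
      = totalEuclCurv γ P + ∫ x in (0:ℝ)..P, (deriv γ x).1 / (γ x).2 := by
    unfold totalHypCurv totalEuclCurv
    rw [intervalIntegral.integral_congr
      (g := fun x => ecurv γ x * euclNorm (deriv γ x) + (deriv γ x).1 / (γ x).2)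
      (fun x _ => hcurv_mul_dsFactor γ hsm hpos himm x)]
    exact intervalIntegral.integral_add (hg1.intervalIntegrable 0 P)
      (hg2.intervalIntegrable 0 P)
  have hIbound : |∫ x in (0:ℝ)..P, (deriv γ x).1 / (γ x).2| ≤ hyperLength γ P := by
    calc |∫ x in (0:ℝ)..P, (deriv γ x).1 / (γ x).2|
        ≤ ∫ x in (0:ℝ)..P, |(deriv γ x).1 / (γ x).2| :=
          intervalIntegral.abs_integral_le_integral_abs hP.le
      _ ≤ ∫ x in (0:ℝ)..P, dsFactor γ x := by
          apply intervalIntegral.integral_mono_on hP.le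
            (hg2.abs.intervalIntegrable 0 P) (hg3.intervalIntegrable 0 P)
          intro x _
          have hb : |(deriv γ x).1| ≤ euclNorm (deriv γ x) := by
            rw [← Real.sqrt_sq_eq_abs]
            exact Real.sqrt_le_sqrt (by nlinarith [sq_nonneg (deriv γ x).2])
          rw [abs_div, abs_of_pos (hpos x)]
          unfold dsFactor
          gcongr
          exact (hpos x).le
      _ = hyperLength γ P := rfl
  have habs : |(2 * π * (m : ℝ))| = 2 * π * |(m : ℝ)| := by
    rw [abs_mul, abs_of_pos (by positivity : (0:ℝ) < 2 * π)]
  have hmain : 2 * π * |(m : ℝ)| - hyperLength γ P ≤ |totalHypCurv γ P| := by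
    have h1 : |(2 * π * (m : ℝ))|
        ≤ |totalHypCurv γ P| + |∫ x in (0:ℝ)..P, (deriv γ x).1 / (γ x).2| := by
      calc |(2 * π * (m : ℝ))|
          = |totalHypCurv γ P - ∫ x in (0:ℝ)..P, (deriv γ x).1 / (γ x).2| := by
            rw [key, hm]; congr 1; ring
        _ ≤ _ := abs_sub _ _
    linarith [hIbound, habs.ge, habs.le]
  refine ⟨hmain, fun hL h0 => ?_⟩
  rw [h0, abs_zero] at hmain
  linarith

end
end

section
/- Let λ ∈ ℝ, m ∈ ℕ, and consider on the circle of length L = 2πm/√(1+λ) the test function φ(s) = cos(√(1+λ)·((m+1)/m)·s). Then ∫ φ² ds = ∫ (φ')² / ((1+λ)((m+1)/m)²) ds = mπ/√(1+λ), and the quadratic form Q(φ) = ∫ [2(φ'')² − (6+4λ)(φ')² + (4 + 6λ + 2λ²)φ²] ds evaluates to (2π/√(1+λ)) · (λ+1)(2m+1)(λ(2m+1) − m² + 2m + 1)/m³, which is negative whenever −1 < λ < (m² − 2m − 1)/(2m+1). -/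
open Real

/-!
The test function `φ(s) = cos(k s)` with `k = √(1+λ)·(m+1)/m` completes exactly `m + 1` periods on
`[0, L]`, so `∫ cos²(k s) = ∫ sin²(k s) = L/2`. Since `φ' = -k sin(k s)` and `φ'' = -k² φ`, the
quadratic form collapses to `(2k⁴ − (6+4λ)k² + 4 + 6λ + 2λ²)·L/2`, and substituting
`k² = (1+λ)(m+1)²/m²` gives the closed form, whose sign is that of `λ(2m+1) − m² + 2m + 1`.
-/

namespace SecondVariation

variable {k L : ℝ}

theorem deriv_cos_mul (k : ℝ) :
    deriv (fun s => cos (k * s)) = fun s => -k * sin (k * s) := by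
  funext s
  rw [((hasDerivAt_id' s).const_mul k).cos.deriv]
  ring

theorem deriv_deriv_cos_mul (k : ℝ) :
    deriv (deriv fun s => cos (k * s)) = fun s => -k ^ 2 * cos (k * s) := by
  rw [deriv_cos_mul]
  funext s
  rw [((((hasDerivAt_id' s).const_mul k).sin).const_mul (-k)).deriv]
  ring

theorem integral_cos_mul_sq (hk : k ≠ 0) (hkL : sin (k * L) = 0) :
    ∫ s in (0 : ℝ)..L, cos (k * s) ^ 2 = L / 2 := by
  rw [intervalIntegral.integral_comp_mul_left (fun x => cos x ^ 2) hk, mul_zero, integral_cos_sq,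
    hkL, sin_zero, smul_eq_mul]
  field_simp
  ring

theorem integral_sin_mul_sq (hk : k ≠ 0) (hkL : sin (k * L) = 0) :
    ∫ s in (0 : ℝ)..L, sin (k * s) ^ 2 = L / 2 := by
  rw [intervalIntegral.integral_comp_mul_left (fun x => sin x ^ 2) hk, mul_zero, integral_sin_sq,
    hkL, sin_zero, smul_eq_mul]
  field_simp
  ring

theorem integral_quadratic_form_cos_mul (a b c : ℝ) (hk : k ≠ 0) (hkL : sin (k * L) = 0) :
    ∫ s in (0 : ℝ)..L, (a * deriv (deriv fun s => cos (k * s)) s ^ 2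
        + b * deriv (fun s => cos (k * s)) s ^ 2 + c * cos (k * s) ^ 2)
      = (a * k ^ 4 + b * k ^ 2 + c) * (L / 2) := by
  have hpointwise : ∀ s, a * deriv (deriv fun s => cos (k * s)) s ^ 2
      + b * deriv (fun s => cos (k * s)) s ^ 2 + c * cos (k * s) ^ 2
        = (a * k ^ 4 + c) * cos (k * s) ^ 2 + b * k ^ 2 * sin (k * s) ^ 2 := by
    intro s
    rw [deriv_deriv_cos_mul, deriv_cos_mul]
    ring
  simp_rw [hpointwise]
  rw [intervalIntegral.integral_add (Continuous.intervalIntegrable (by fun_prop) _ _)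
      (Continuous.intervalIntegrable (by fun_prop) _ _),
    intervalIntegral.integral_const_mul, intervalIntegral.integral_const_mul,
    integral_cos_mul_sq hk hkL, integral_sin_mul_sq hk hkL]
  ring

end SecondVariation

open SecondVariation in
/-- with `L = 2πm/√(1+lam)` and `φ(s) = cos(√(1+lam)·((m+1)/m)·s)`, one has
`∫ φ² ds = ∫ (φ')²/((1+lam)((m+1)/m)²) ds = mπ/√(1+lam)`, and the second-variation
quadratic form `Q(φ) = ∫ [2(φ'')² − (6+4lam)(φ')² + (4+6lam+2lam²)φ²] ds` equals
`(2π/√(1+lam))·(lam+1)(2m+1)(lam(2m+1) − m² + 2m + 1)/m³`, which is negative whenever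
`−1 < lam < (m² − 2m − 1)/(2m+1)`. -/
theorem second_variation_test_function (lam : ℝ) (hlam : -1 < lam) (m : ℕ) (hm : 1 ≤ m) :
    let k : ℝ := Real.sqrt (1 + lam) * (((m : ℝ) + 1) / m)
    let L : ℝ := 2 * π * m / Real.sqrt (1 + lam)
    let φ : ℝ → ℝ := fun s => Real.cos (k * s)
    let Q : ℝ := ∫ s in (0:ℝ)..L,
      (2 * (deriv (deriv φ) s) ^ 2 - (6 + 4 * lam) * (deriv φ s) ^ 2
        + (4 + 6 * lam + 2 * lam ^ 2) * (φ s) ^ 2)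
    (∫ s in (0:ℝ)..L, (φ s) ^ 2) = m * π / Real.sqrt (1 + lam) ∧
    (∫ s in (0:ℝ)..L, (deriv φ s) ^ 2 / ((1 + lam) * (((m : ℝ) + 1) / m) ^ 2))
      = m * π / Real.sqrt (1 + lam) ∧
    Q = (2 * π / Real.sqrt (1 + lam)) * (lam + 1) * (2 * (m : ℝ) + 1)
          * (lam * (2 * (m : ℝ) + 1) - (m : ℝ) ^ 2 + 2 * m + 1) / (m : ℝ) ^ 3 ∧
    (lam < ((m : ℝ) ^ 2 - 2 * m - 1) / (2 * (m : ℝ) + 1) → Q < 0) := by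
  intro k L φ Q
  have hsqrt : 0 < √(1 + lam) := sqrt_pos.mpr (by linarith)
  have hm0 : (0 : ℝ) < m := by exact_mod_cast hm
  have hk : k ≠ 0 := by positivity
  have hk2 : k ^ 2 = (1 + lam) * (((m : ℝ) + 1) / m) ^ 2 := by
    rw [mul_pow, sq_sqrt (by linarith)]
  have hkL : sin (k * L) = 0 := by
    have : k * L = ((2 * (m + 1) : ℕ) : ℝ) * π := by
      simp only [k, L]; push_cast; field_simp
    rw [this, sin_nat_mul_pi]
  have hL : L / 2 = m * π / √(1 + lam) := by ring
  have hQ : Q = (2 * π / √(1 + lam)) * (lam + 1) * (2 * (m : ℝ) + 1)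
      * (lam * (2 * (m : ℝ) + 1) - (m : ℝ) ^ 2 + 2 * m + 1) / (m : ℝ) ^ 3 := by
    simp only [Q, φ, sub_eq_add_neg, ← neg_mul]
    rw [integral_quadratic_form_cos_mul _ _ _ hk hkL, show k ^ 4 = (k ^ 2) ^ 2 by ring, hk2, hL]
    field_simp
    ring
  refine ⟨by rw [integral_cos_mul_sq hk hkL, hL], ?_, hQ, fun hlt => ?_⟩
  · simp only [φ, deriv_cos_mul, ← hk2, mul_pow, neg_sq]
    simp_rw [mul_div_cancel_left₀ _ (pow_ne_zero 2 hk)]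
    rw [integral_sin_mul_sq hk hkL, hL]
  · have hneg : lam * (2 * (m : ℝ) + 1) - (m : ℝ) ^ 2 + 2 * m + 1 < 0 := by
      rw [lt_div_iff₀ (by positivity)] at hlt
      linarith
    have hlam1 : 0 < lam + 1 := by linarith
    rw [hQ]
    exact div_neg_of_neg_of_pos (mul_neg_of_pos_of_neg (by positivity) hneg) (by positivity)
end
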